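/- Let w(z) = -log|z| on ℝ²\{0}, and let z₀ ∈ ℝ², L > 0. Define G(z) = a w(z - z₀) + (2/π) ∫_{B(z₀,L)} log|z - y| dy with a = 2L². Then for |z - z₀| = r ≤ L, G(z) = 2L² log L - 2L² log r + r² - L², and in particular G is radially symmetric around z₀ on B(z₀,L) and vanishes on the boundary |z - z₀| = L. -/

import Mathlib

/-!
In polar coordinates around `z₀`, the integral over the ball becomes
`∫₀ᴸ 2π s · (circle average of log ‖z - ·‖ over the circle of radius s) ds`.
By the mean value property of the harmonic function `log ‖z - ·‖` (Jensen's formula), that circle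
average is `log (max s r)` with `r = ‖z - z₀‖`, and the remaining one-dimensional integral is
elementary.
-/

open MeasureTheory Real Set Metric

theorem abs_log_le_mul_rpow_neg_half {t r : ℝ} (ht : 0 ≤ t) (htr : t ≤ r) :
    |log t| ≤ 2 * (r + 1) * t ^ (-(1 / 2 : ℝ)) := by
  rcases ht.eq_or_lt with rfl | ht
  · simp
  have hpow : 0 < t ^ (-(1 / 2 : ℝ)) := rpow_pos_of_pos ht _
  have hsplit : t ^ (1 / 2 : ℝ) = t * t ^ (-(1 / 2 : ℝ)) := by
    rw [← rpow_one_add' ht.le (by norm_num)]; norm_num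
  have hupper : log t ≤ 2 * r * t ^ (-(1 / 2 : ℝ)) := by
    have := log_le_rpow_div ht.le (ε := 1 / 2) (by norm_num)
    rw [hsplit] at this
    nlinarith
  have hlower : -log t ≤ 2 * t ^ (-(1 / 2 : ℝ)) := by
    have := log_le_rpow_div (inv_nonneg.2 ht.le) (ε := 1 / 2) (by norm_num)
    rw [log_inv, inv_rpow ht.le, ← rpow_neg ht.le] at this
    linarith
  rw [abs_le]; constructor <;> nlinarith

section LocallyIntegrable

variable {E : Type*} [NormedAddCommGroup E] [NormedSpace ℝ E] [FiniteDimensional ℝ E]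
  [MeasurableSpace E] [BorelSpace E] [Nontrivial E] (μ : Measure E) [μ.IsAddHaarMeasure]

theorem locallyIntegrable_log_norm : LocallyIntegrable (fun x : E ↦ log ‖x‖) μ := by
  intro x
  refine ⟨ball 0 (‖x‖ + 1), isOpen_ball.mem_nhds (by simp), ?_⟩
  refine integrableOn_ball_of_norm_le_rpow (C := 2 * (‖x‖ + 1 + 1)) (α := 1 / 2)
    Module.finrank_pos (lt_of_lt_of_le (by norm_num) (Nat.one_le_cast.2 Module.finrank_pos)) ?_
    (by fun_prop : Measurable fun x : E ↦ log ‖x‖).aestronglyMeasurable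
  filter_upwards [ae_restrict_mem measurableSet_ball] with y hy
  rw [mem_ball_zero_iff] at hy
  exact abs_log_le_mul_rpow_neg_half (norm_nonneg y) hy.le

theorem locallyIntegrable_log_norm_sub (z : E) :
    LocallyIntegrable (fun y : E ↦ log ‖z - y‖) μ := by
  simp_rw [norm_sub_rev z]
  refine (locallyIntegrable_map_homeomorph (μ := μ) (f := fun x : E ↦ log ‖x‖)
    (Homeomorph.subRight z)).1 ?_
  have hmap : μ.map (Homeomorph.subRight z) = μ := (measurePreserving_sub_right μ z).map_eq
  rw [hmap]
  exact locallyIntegrable_log_norm μ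

end LocallyIntegrable

theorem circleAverage_log_norm_sub_const_eq_log_max {a c : ℂ} {s : ℝ} (hs : 0 < s) :
    circleAverage (log ‖· - a‖) c s = log (max s ‖c - a‖) := by
  rw [circleAverage_log_norm_sub_const_eq_log_radius_add_posLog hs.ne']
  rcases le_or_gt ‖c - a‖ s with h | h
  · rw [max_eq_left h, (posLog_eq_zero_iff _).2, add_zero]
    rw [abs_of_nonneg (by positivity)]
    exact inv_mul_le_one_of_le₀ h hs.le
  · have hd : 0 < ‖c - a‖ := hs.trans h
    rw [max_eq_right h.le, posLog_eq_log, log_mul (inv_pos.2 hs).ne' hd.ne', log_inv]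
    · ring
    · rw [abs_of_nonneg (by positivity), le_inv_mul_iff₀ hs]; linarith

section PolarCoord

variable {E : Type*} [NormedAddCommGroup E] [NormedSpace ℝ E]

theorem Complex.polarCoord_symm_eq_circleMap (p : ℝ × ℝ) :
    Complex.polarCoord.symm p = circleMap 0 p.1 p.2 := by
  simp [circleMap, Complex.exp_mul_I]

theorem Complex.integrableOn_comp_polarCoord_symm_iff (f : ℂ → E) :
    IntegrableOn (fun p ↦ p.1 • f (Complex.polarCoord.symm p)) polarCoord.target ↔
      Integrable f := by
  have hjac := integrableOn_image_iff_integrableOn_abs_det_fderiv_smul volume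
    polarCoord.open_target.measurableSet
    (fun p _ ↦ (hasFDerivAt_polarCoord_symm p).hasFDerivWithinAt) polarCoord.symm.injOn
    (f ∘ Complex.measurableEquivRealProd.symm)
  simp_rw [det_fderivPolarCoordSymm, polarCoord.symm_image_target_eq_source,
    integrableOn_congr_set_ae polarCoord_source_ae_eq_univ, integrableOn_univ,
    (Complex.volume_preserving_equiv_real_prod.symm).integrable_comp_emb
      Complex.measurableEquivRealProd.symm.measurableEmbedding] at hjac
  rw [hjac]
  refine integrableOn_congr_fun (fun p hp ↦ ?_) polarCoord.open_target.measurableSet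
  rw [abs_of_pos hp.1]
  rfl

theorem integral_Ioo_neg_pi_pi_circleMap (f : ℂ → E) (c : ℂ) (s : ℝ) :
    ∫ θ in Ioo (-π) π, f (circleMap c s θ) = (2 * π) • circleAverage f c s := by
  rw [circleAverage_eq_integral_add (-π), smul_inv_smul₀ (by positivity),
    intervalIntegral.integral_comp_add_right (fun θ ↦ f (circleMap c s θ)),
    intervalIntegral.integral_of_le (by linarith [pi_pos]), integral_Ioc_eq_integral_Ioo]
  congr 2
  ring_nf

theorem integral_ball_zero_eq_integral_circleAverage {f : ℂ → E} {R : ℝ} (hR : 0 ≤ R)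
    (hf : IntegrableOn f (ball 0 R)) :
    ∫ z in ball 0 R, f z = ∫ s in 0..R, (2 * π * s) • circleAverage f 0 s := by
  set g := (ball (0 : ℂ) R).indicator f
  have hpolar := (Complex.integrableOn_comp_polarCoord_symm_iff g).2
    (hf.integrable_indicator measurableSet_ball)
  rw [polarCoord_target] at hpolar
  have hslice : ∀ s ∈ Ioi (0 : ℝ), ∫ θ in Ioo (-π) π, s • g (circleMap 0 s θ) =
      (Iio R).indicator (fun s ↦ (2 * π * s) • circleAverage f 0 s) s := by
    intro s hs
    have hmem : ∀ θ, circleMap 0 s θ ∈ ball 0 R ↔ s ∈ Iio R := fun θ ↦ by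
      rw [mem_ball_zero_iff, norm_circleMap_zero, abs_of_pos hs, mem_Iio]
    by_cases hsR : s ∈ Iio R
    · simp_rw [g, indicator_of_mem ((hmem _).2 hsR), indicator_of_mem hsR, integral_smul,
        integral_Ioo_neg_pi_pi_circleMap, smul_smul, mul_comm s]
    · simp_rw [g, indicator_of_notMem (mt (hmem _).1 hsR), indicator_of_notMem hsR, smul_zero,
        integral_zero]
  calc ∫ z in ball 0 R, f z = ∫ z, g z := (integral_indicator measurableSet_ball).symm
    _ = ∫ p in Ioi 0 ×ˢ Ioo (-π) π, p.1 • g (Complex.polarCoord.symm p) :=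
      (Complex.integral_comp_polarCoord_symm g).symm
    _ = ∫ s in Ioi 0, ∫ θ in Ioo (-π) π, s • g (circleMap 0 s θ) := by
      rw [Measure.volume_eq_prod, setIntegral_prod _ hpolar]
      simp_rw [Complex.polarCoord_symm_eq_circleMap]
    _ = ∫ s in Ioi 0, (Iio R).indicator (fun s ↦ (2 * π * s) • circleAverage f 0 s) s :=
      setIntegral_congr_fun measurableSet_Ioi hslice
    _ = ∫ s in 0..R, (2 * π * s) • circleAverage f 0 s := by
      rw [setIntegral_indicator measurableSet_Iio, Ioi_inter_Iio,
        intervalIntegral.integral_of_le hR, integral_Ioc_eq_integral_Ioo]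

theorem integral_ball_eq_integral_circleAverage {f : ℂ → E} {c : ℂ} {R : ℝ} (hR : 0 ≤ R)
    (hf : IntegrableOn f (ball c R)) :
    ∫ z in ball c R, f z = ∫ s in 0..R, (2 * π * s) • circleAverage f c s := by
  have htrans := measurePreserving_add_right volume c
  have hball : (· + c) ⁻¹' ball c R = ball 0 R := by simp
  rw [← htrans.setIntegral_preimage_emb (measurableEmbedding_addRight c), hball,
    integral_ball_zero_eq_integral_circleAverage hR]
  · simp_rw [circleAverage_map_add_const]
  · rw [← hball]
    exact (htrans.integrableOn_comp_preimage (measurableEmbedding_addRight c)).2 hf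

end PolarCoord

theorem integral_mul_log_max {r R : ℝ} (hr : 0 ≤ r) (hrR : r ≤ R) :
    ∫ s in 0..R, 2 * π * s * log (max s r) = π * R ^ 2 * log R + π / 2 * (r ^ 2 - R ^ 2) := by
  have hcont : Continuous fun s ↦ 2 * π * s * log (max s r) := by
    have hpiece : (fun s ↦ 2 * π * s * log (max s r)) =
        fun s ↦ if s ≤ r then 2 * π * log r * s else 2 * π * (s * log s) := by
      ext s
      split_ifs with h
      · rw [max_eq_right h]; ring
      · rw [max_eq_left (not_le.1 h).le]; ring
    rw [hpiece]
    exact Continuous.if_le (by fun_prop) (continuous_const.mul continuous_mul_log)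
      continuous_id continuous_const fun s hs ↦ by rw [hs]; ring
  have hinner : ∫ s in 0..r, 2 * π * s * log (max s r) = π * r ^ 2 * log r := by
    rw [intervalIntegral.integral_congr (g := fun s ↦ 2 * π * log r * s) fun s hs ↦ by
      rw [uIcc_of_le hr] at hs; dsimp only; rw [max_eq_right hs.2]; ring,
      intervalIntegral.integral_const_mul, integral_id]
    ring
  have hantideriv : ∀ x ∈ Ioo r R,
      HasDerivAt (fun s ↦ s / 2 * (s * log s) - s ^ 2 / 4) (x * log x) x := by
    intro x hx
    have hx0 : x ≠ 0 := (hr.trans_lt hx.1).ne'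
    exact (((hasDerivAt_id' x).div_const 2).fun_mul (hasDerivAt_mul_log hx0)).fun_sub
      ((hasDerivAt_pow 2 x).div_const 4) |>.congr_deriv (by push_cast; ring)
  have houter : ∫ s in r..R, 2 * π * s * log (max s r) =
      2 * π * ((R / 2 * (R * log R) - R ^ 2 / 4) - (r / 2 * (r * log r) - r ^ 2 / 4)) := by
    rw [intervalIntegral.integral_congr (g := fun s ↦ 2 * π * (s * log s)) fun s hs ↦ by
      rw [uIcc_of_le hrR] at hs; dsimp only; rw [max_eq_left hs.1]; ring,
      intervalIntegral.integral_const_mul, intervalIntegral.integral_eq_sub_of_hasDerivAt_of_le hrR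
        (by fun_prop) hantideriv (continuous_mul_log.intervalIntegrable _ _)]
  rw [← intervalIntegral.integral_add_adjacent_intervals (b := r) (hcont.intervalIntegrable _ _)
    (hcont.intervalIntegrable _ _), hinner, houter]
  ring

theorem integral_ball_log_norm_sub {c z : ℂ} {R : ℝ} (hz : dist z c ≤ R) :
    ∫ y in ball c R, log ‖z - y‖ = π * R ^ 2 * log R + π / 2 * (dist z c ^ 2 - R ^ 2) := by
  have hR : 0 ≤ R := dist_nonneg.trans hz
  have hint : IntegrableOn (fun y ↦ log ‖z - y‖) (ball c R) :=
    ((locallyIntegrable_log_norm_sub volume z).integrableOn_isCompact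
      (isCompact_closedBall c R)).mono_set ball_subset_closedBall
  rw [integral_ball_eq_integral_circleAverage hR hint, ← integral_mul_log_max dist_nonneg hz]
  refine intervalIntegral.integral_congr fun s hs ↦ ?_
  rcases (uIcc_of_le hR ▸ hs).1.eq_or_lt with rfl | hs
  · simp
  · simp_rw [norm_sub_rev z]
    rw [circleAverage_log_norm_sub_const_eq_log_max hs, ← dist_eq_norm, dist_comm, smul_eq_mul]

theorem stmt19_general (z₀ : ℂ) (L : ℝ) (a : ℝ) (ha : a = 2 * L ^ 2)
    (G : ℂ → ℝ)
    (hG : ∀ z : ℂ, G z = a * (-Real.log ‖z - z₀‖) +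
      (2 / Real.pi) * ∫ y in Metric.ball z₀ L, Real.log ‖z - y‖) :
    ∀ (z : ℂ) (r : ℝ), dist z z₀ = r → 0 < r → r ≤ L →
      G z = 2 * L ^ 2 * Real.log L - 2 * L ^ 2 * Real.log r + r ^ 2 - L ^ 2 := by
  intro z r hdist _ hrL
  rw [hG, integral_ball_log_norm_sub (hdist ▸ hrL), ← dist_eq_norm, hdist, ha]
  field_simp
  ring

theorem stmt19 (z₀ : ℂ) (L : ℝ) (hL : 0 < L) (a : ℝ) (ha : a = 2 * L ^ 2)
    (G : ℂ → ℝ)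
    (hG : ∀ z : ℂ, G z = a * (-Real.log ‖z - z₀‖) +
      (2 / Real.pi) * ∫ y in Metric.ball z₀ L, Real.log ‖z - y‖) :
    ∀ (z : ℂ) (r : ℝ), dist z z₀ = r → 0 < r → r ≤ L →
      G z = 2 * L ^ 2 * Real.log L - 2 * L ^ 2 * Real.log r + r ^ 2 - L ^ 2 :=
  stmt19_general z₀ L a ha G hG
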